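/- arXiv:0811.1172 — 4 statements merged into one kernel-verified Lean document; each statement's English description precedes it below -/
import Mathlib

section
/- Let A_{-2},…,A_2 ∈ ℂ with A_2 ≠ 0, let α ∈ ℂ satisfy α² = -A_2, set μ = -A_1/(2α), and let N ∈ ℕ. Let a_0, a_1, …, a_N ∈ ℂ (with the convention a_{-1} = a_{-2} = 0) satisfy the recurrence 2αm·a_m = (m-μ)(m-1-μ)a_{m-1} + A_0 a_{m-1} + A_{-1} a_{m-2} + A_{-2} a_{m-3} for 1 ≤ m ≤ N. Define w(z) = exp(αz) Σ_{m=0}^{N} a_m z^{μ-m} for z > 0. Then for all z > 0: z² w''(z) + (Σ_{p=-2}^{2} A_p z^p) w(z) = exp(αz)·[ (((μ-N)(μ-N-1)+A_0)a_N + A_{-1} a_{N-1} + A_{-2} a_{N-2}) z^{μ-N} + (A_{-1} a_N + A_{-2} a_{N-1}) z^{μ-N-1} + A_{-2} a_N z^{μ-N-2} ]. -/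
/-!
Write `w = exp (α z) g` with `g = Σ a_m z^{μ-m}` and `Q = Σ A_p z^p`. Since `α² = -A₂`,
`z² w'' + Q w = exp (α z) L g` with `L g = z² (g'' + 2α g') + (Q - A₂ z²) g`, and since
`A₁ = -2αμ`, `L` sends `z^{μ-m}` to a combination of `z^{μ-m+1}, …, z^{μ-m-2}` whose
leading coefficient is `-2αm`. Hence the coefficient of `z^{μ-k}` in `L g` is the recurrence at
index `k + 1`, which vanishes for `k < N`; only the tails of `a_N, a_{N-1}, a_{N-2}` survive.
-/

open Complex Filter Finset Topology

theorem hasDerivAt_ofReal_cpow_const_of_pos (c : ℂ) {z : ℝ} (hz : 0 < z) :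
    HasDerivAt (fun y : ℝ => (y : ℂ) ^ c) (c * (z : ℂ) ^ (c - 1)) z :=
  (hasStrictDerivAt_cpow_const (ofReal_mem_slitPlane.mpr hz)).hasDerivAt.comp_ofReal

theorem hasDerivAt_sum_mul_ofReal_cpow {ι : Type*} (s : Finset ι) (c e : ι → ℂ) {z : ℝ}
    (hz : 0 < z) :
    HasDerivAt (fun y : ℝ => ∑ i ∈ s, c i * (y : ℂ) ^ e i)
      (∑ i ∈ s, c i * e i * (z : ℂ) ^ (e i - 1)) z := by
  simp_rw [mul_assoc]
  exact HasDerivAt.fun_sum fun i _ => (hasDerivAt_ofReal_cpow_const_of_pos (e i) hz).const_mul _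

theorem hasDerivAt_cexp_const_mul_ofReal (α : ℂ) (y : ℝ) :
    HasDerivAt (fun t : ℝ => cexp (α * t)) (cexp (α * y) * α) y := by
  simpa using ((hasDerivAt_id (y : ℂ)).const_mul α).cexp.comp_ofReal

theorem deriv_deriv_cexp_const_mul_mul {α g'' : ℂ} {g g' : ℝ → ℂ} {z : ℝ}
    (hg : ∀ᶠ y in 𝓝 z, HasDerivAt g (g' y) y) (hg' : HasDerivAt g' g'' z) :
    deriv (deriv fun y : ℝ => cexp (α * y) * g y) z =
      cexp (α * z) * (α ^ 2 * g z + 2 * α * g' z + g'') := by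
  have hfirst : deriv (fun y : ℝ => cexp (α * y) * g y) =ᶠ[𝓝 z]
      fun y => cexp (α * y) * (α * g y + g' y) := by
    filter_upwards [hg] with y hy
    rw [((hasDerivAt_cexp_const_mul_ofReal α y).fun_mul hy).deriv]
    ring
  have hsecond := (hasDerivAt_cexp_const_mul_ofReal α z).fun_mul
    (((hg.self_of_nhds).const_mul α).fun_add hg')
  rw [hfirst.deriv_eq, hsecond.deriv]
  ring

theorem dche_monomial_residual (Am2 Am1 A0 α μ s : ℂ) {z : ℝ} (hz : 0 < z) :
    (z : ℂ) ^ 2 * (2 * α * (s * (z : ℂ) ^ (s - 1)) + s * (s - 1) * (z : ℂ) ^ (s - 1 - 1)) +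
        (Am2 / (z : ℂ) ^ 2 + Am1 / z + A0 - 2 * α * μ * z) * (z : ℂ) ^ s =
      2 * α * (s - μ) * (z : ℂ) ^ (s + 1) + (s * (s - 1) + A0) * (z : ℂ) ^ s +
        Am1 * (z : ℂ) ^ (s - 1) + Am2 * (z : ℂ) ^ (s - 2) := by
  have hz0 : (z : ℂ) ≠ 0 := ofReal_ne_zero.mpr hz.ne'
  simp only [cpow_add _ _ hz0, cpow_sub _ _ hz0, cpow_one, cpow_ofNat]
  field_simp
  ring

theorem sum_formal_residual_eq_boundary (Am2 Am1 A0 α μ : ℂ) (N : ℕ) (a u : ℤ → ℂ)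
    (ham1 : a (-1) = 0) (ham2 : a (-2) = 0)
    (hrec : ∀ m : ℤ, 1 ≤ m → m ≤ (N : ℤ) →
      2 * α * (m : ℂ) * a m =
        ((m : ℂ) - μ) * ((m : ℂ) - 1 - μ) * a (m - 1) + A0 * a (m - 1) +
          Am1 * a (m - 2) + Am2 * a (m - 3)) :
    ∑ m ∈ range (N + 1),
        a m * (-(2 * α * (m : ℂ)) * u ((m : ℤ) - 1) + ((μ - m) * (μ - m - 1) + A0) * u m
          + Am1 * u ((m : ℤ) + 1) + Am2 * u ((m : ℤ) + 2)) =
      (((μ - N) * (μ - N - 1) + A0) * a N + Am1 * a ((N : ℤ) - 1)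
          + Am2 * a ((N : ℤ) - 2)) * u N
        + (Am1 * a N + Am2 * a ((N : ℤ) - 1)) * u ((N : ℤ) + 1)
        + Am2 * a N * u ((N : ℤ) + 2) := by
  induction N with
  | zero =>
    simp only [zero_add, range_one, sum_singleton, CharP.cast_eq_zero, Int.reduceNeg, zero_sub,
      mul_zero, neg_zero, zero_mul, sub_zero, add_zero, ham1, ham2]
    ring
  | succ n ih =>
    rw [sum_range_succ, ih fun m h1 h2 => hrec m h1 (by omega)]
    have hrec_succ := hrec ((n : ℤ) + 1) (by omega) (by push_cast; omega)
    push_cast at hrec_succ ⊢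
    simp only [show (n : ℤ) + 1 - 1 = n by ring, show (n : ℤ) + 1 - 2 = n - 1 by ring,
      show (n : ℤ) + 1 - 3 = n - 2 by ring, show (n : ℤ) + 1 + 1 = n + 2 by ring,
      show (n : ℤ) + 1 + 2 = n + 3 by ring] at hrec_succ ⊢
    linear_combination (-u n) * hrec_succ

theorem dche_residual_eq_sum (Am2 Am1 A0 α μ : ℂ) (N : ℕ) (a : ℤ → ℂ) {z : ℝ}
    (hz : 0 < z) :
    (z : ℂ) ^ 2 * (2 * α * ∑ m ∈ range (N + 1), a m * (μ - m) * (z : ℂ) ^ (μ - m - 1) +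
        ∑ m ∈ range (N + 1), a m * (μ - m) * (μ - m - 1) * (z : ℂ) ^ (μ - m - 1 - 1)) +
        (Am2 / (z : ℂ) ^ 2 + Am1 / z + A0 - 2 * α * μ * z) *
          ∑ m ∈ range (N + 1), a m * (z : ℂ) ^ (μ - m) =
      ∑ m ∈ range (N + 1),
        a m * (-(2 * α * (m : ℂ)) * (z : ℂ) ^ (μ - ((m : ℤ) - 1 : ℤ))
          + ((μ - m) * (μ - m - 1) + A0) * (z : ℂ) ^ (μ - (m : ℤ))
          + Am1 * (z : ℂ) ^ (μ - ((m : ℤ) + 1 : ℤ))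
          + Am2 * (z : ℂ) ^ (μ - ((m : ℤ) + 2 : ℤ))) := by
  simp only [mul_sum, ← sum_add_distrib]
  refine sum_congr rfl fun m _ => ?_
  push_cast
  rw [show μ - ((m : ℂ) - 1) = μ - m + 1 by ring, sub_add_eq_sub_sub, sub_add_eq_sub_sub]
  linear_combination a m * dche_monomial_residual Am2 Am1 A0 α μ (μ - m) hz

/-- a truncation `w(z) = e^{αz} Σ_{m=0}^{N} a_m z^{μ-m}` of the formal
solution at `z = ∞` of the DCHE (with `α² = -A₂`, `μ = -A₁/(2α)`, and coefficients
satisfying the recurrence `2αm a_m = (m-μ)(m-1-μ)a_{m-1} + A₀ a_{m-1} + A_{-1} a_{m-2}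
+ A_{-2} a_{m-3}`) satisfies the equation exactly up to three explicit boundary terms. -/
theorem dche_truncated_formal_infinity_residual
    (Am2 Am1 A0 A1 A2 α μ : ℂ) (hA2 : A2 ≠ 0)
    (hα : α ^ 2 = -A2) (hμ : μ = -A1 / (2 * α)) (N : ℕ)
    (a : ℤ → ℂ) (ham1 : a (-1) = 0) (ham2 : a (-2) = 0)
    (hrec : ∀ m : ℤ, 1 ≤ m → m ≤ (N : ℤ) →
      2 * α * (m : ℂ) * a m =
        ((m : ℂ) - μ) * ((m : ℂ) - 1 - μ) * a (m - 1) + A0 * a (m - 1) +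
          Am1 * a (m - 2) + Am2 * a (m - 3))
    (w : ℝ → ℂ)
    (hw : ∀ z : ℝ, w z =
      Complex.exp (α * z) * ∑ m ∈ Finset.range (N + 1), a (m : ℤ) * (z : ℂ) ^ (μ - (m : ℂ))) :
    ∀ z : ℝ, 0 < z →
      (z : ℂ) ^ 2 * deriv (deriv w) z +
        (Am2 / (z : ℂ) ^ 2 + Am1 / (z : ℂ) + A0 + A1 * (z : ℂ) + A2 * (z : ℂ) ^ 2) * w z =
      Complex.exp (α * z) *
        ((((μ - (N : ℂ)) * (μ - (N : ℂ) - 1) + A0) * a (N : ℤ) +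
            Am1 * a ((N : ℤ) - 1) + Am2 * a ((N : ℤ) - 2)) * (z : ℂ) ^ (μ - (N : ℂ)) +
          (Am1 * a (N : ℤ) + Am2 * a ((N : ℤ) - 1)) * (z : ℂ) ^ (μ - (N : ℂ) - 1) +
          Am2 * a (N : ℤ) * (z : ℂ) ^ (μ - (N : ℂ) - 2)) := by
  intro z hz
  have hα0 : α ≠ 0 := by
    rintro rfl
    exact hA2 (by simpa using hα.symm)
  have hA1 : A1 = -(2 * α * μ) := by rw [hμ]; field_simp
  have hA2' : A2 = -α ^ 2 := by linear_combination hα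
  have hderiv2 := deriv_deriv_cexp_const_mul_mul (α := α)
    (eventually_of_mem (Ioi_mem_nhds hz) fun y hy => hasDerivAt_sum_mul_ofReal_cpow
      (range (N + 1)) (fun m : ℕ => a m) (fun m : ℕ => μ - m) hy)
    (hasDerivAt_sum_mul_ofReal_cpow _ _ _ hz)
  rw [funext hw, hderiv2, hA1, hA2']
  calc
    _ = cexp (α * z) * ((z : ℂ) ^ 2 *
          (2 * α * ∑ m ∈ range (N + 1), a m * (μ - m) * (z : ℂ) ^ (μ - m - 1) +
            ∑ m ∈ range (N + 1), a m * (μ - m) * (μ - m - 1) * (z : ℂ) ^ (μ - m - 1 - 1)) +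
          (Am2 / (z : ℂ) ^ 2 + Am1 / z + A0 - 2 * α * μ * z) *
            ∑ m ∈ range (N + 1), a m * (z : ℂ) ^ (μ - m)) := by ring
    _ = _ := by
      rw [dche_residual_eq_sum Am2 Am1 A0 α μ N a hz,
        sum_formal_residual_eq_boundary Am2 Am1 A0 α μ N a (fun k => (z : ℂ) ^ (μ - k))
          ham1 ham2 hrec]
      push_cast
      simp only [sub_add_eq_sub_sub]
end

section
/- Let A_{-2},…,A_2 ∈ ℂ with A_{-2} ≠ 0, let β ∈ ℂ satisfy β² = -A_{-2}, set ρ = 1 + A_{-1}/(2β), and let N ∈ ℕ. Let b_0, b_1, …, b_N ∈ ℂ (with the convention b_{-1} = b_{-2} = 0) satisfy the recurrence 2βm·b_m = (m-1+ρ)(m-2+ρ)b_{m-1} + A_0 b_{m-1} + A_1 b_{m-2} + A_2 b_{m-3} for 1 ≤ m ≤ N. Define w(z) = exp(β/z) Σ_{m=0}^{N} b_m z^{ρ+m} for z > 0. Then for all z > 0: z² w''(z) + (Σ_{p=-2}^{2} A_p z^p) w(z) = exp(β/z)·[ (((N+ρ)(N-1+ρ)+A_0)b_N + A_1 b_{N-1}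 + A_2 b_{N-2}) z^{ρ+N} + (A_1 b_N + A_2 b_{N-1}) z^{ρ+N+1} + A_2 b_N z^{ρ+N+2} ]. -/
/-!
Write `E_c(t) = e^{β/t} t^c`. Since `E_c' = c E_{c-1} - β E_{c-2}` and `t^k E_c = E_{c+k}`, the
operator `z² ∂² + Σ A_p z^p` maps `E_c` to a combination of `E_{c-2}, …, E_{c+2}`. The choice
`β² = -A_{-2}` kills the `E_{c-2}` term and `ρ = 1 + A_{-1}/(2β)` turns the `E_{c-1}` coefficient
into `2β(ρ - c)`, so for `w = Σ b_m E_{ρ+m}` the coefficient of `E_{ρ+k-1}` is exactly the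
recurrence at `k`; only the top three coefficients survive.
-/

open Complex Finset Filter Topology

theorem deriv_deriv_fun_sum {ι 𝕜 F : Type*} [NontriviallyNormedField 𝕜] [NormedAddCommGroup F]
    [NormedSpace 𝕜 F] {s : Finset ι} {f : ι → 𝕜 → F} {x : 𝕜}
    (hf : ∀ᶠ t in 𝓝 x, ∀ i ∈ s, DifferentiableAt 𝕜 (f i) t)
    (hf' : ∀ i ∈ s, DifferentiableAt 𝕜 (deriv (f i)) x) :
    deriv (deriv fun t => ∑ i ∈ s, f i t) x = ∑ i ∈ s, deriv (deriv (f i)) x := by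
  have h : deriv (fun t => ∑ i ∈ s, f i t) =ᶠ[𝓝 x] fun t => ∑ i ∈ s, deriv (f i) t :=
    hf.mono fun t ht => deriv_fun_sum ht
  rw [h.deriv_eq, deriv_fun_sum hf']

theorem sum_mul_eq_boundary_of_recurrence {R : Type*} [CommRing R] (β ρ A0 A1 A2 : R)
    (b : ℤ → R) (e : ℕ → R) (hbm1 : b (-1) = 0) (hbm2 : b (-2) = 0) (n : ℕ)
    (hrec : ∀ m : ℤ, 1 ≤ m → m ≤ (n : ℤ) →
      2 * β * (m : R) * b m =
        ((m : R) - 1 + ρ) * ((m : R) - 2 + ρ) * b (m - 1) + A0 * b (m - 1) +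
          A1 * b (m - 2) + A2 * b (m - 3)) :
    ∑ m ∈ range (n + 1),
      b m * (-(2 * β * m) * e m + (((m : R) + ρ) * ((m : R) - 1 + ρ) + A0) * e (m + 1)
        + A1 * e (m + 2) + A2 * e (m + 3)) =
      ((((n : R) + ρ) * ((n : R) - 1 + ρ) + A0) * b n + A1 * b (n - 1) + A2 * b (n - 2))
          * e (n + 1)
        + (A1 * b n + A2 * b (n - 1)) * e (n + 2) + A2 * b n * e (n + 3) := by
  induction n with
  | zero =>
    simp only [zero_add, sum_range_one, Nat.cast_zero, zero_sub, Int.reduceNeg, hbm1, hbm2]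
    ring
  | succ k ih =>
    have hr := hrec (k + 1) (by omega) (by omega)
    rw [sum_range_succ, ih fun m h1 h2 => hrec m h1 (by omega)]
    push_cast at hr ⊢
    simp only [add_sub_cancel_right, show (k : ℤ) + 1 - 2 = k - 1 by ring,
      show (k : ℤ) + 1 - 3 = k - 2 by ring] at hr ⊢
    linear_combination (-e (k + 1)) * hr

noncomputable def expCpow (β c : ℂ) (t : ℝ) : ℂ := exp (β / t) * (t : ℂ) ^ c

theorem expCpow_add_natCast (β c : ℂ) (n : ℕ) {z : ℝ} (hz : z ≠ 0) :
    expCpow β (c + n) z = (z : ℂ) ^ n * expCpow β c z := by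
  rw [expCpow, expCpow, cpow_add _ _ (ofReal_ne_zero.mpr hz), cpow_natCast]
  ring

theorem hasDerivAt_expCpow (β c : ℂ) {z : ℝ} (hz : 0 < z) :
    HasDerivAt (expCpow β c) (c * expCpow β (c - 1) z - β * expCpow β (c - 2) z) z := by
  have hz0 : (z : ℂ) ≠ 0 := ofReal_ne_zero.mpr hz.ne'
  have hexp : HasDerivAt (fun t : ℝ => exp (β / t)) (exp (β / z) * (-β / (z : ℂ) ^ 2)) z := by
    have := ((hasDerivAt_inv hz0).const_mul β).cexp.comp_ofReal
    simpa [div_eq_mul_inv] using this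
  have hpow : HasDerivAt (fun t : ℝ => (t : ℂ) ^ c) (c * (z : ℂ) ^ (c - 1)) z :=
    ((hasStrictDerivAt_cpow_const (ofReal_mem_slitPlane.mpr hz)).hasDerivAt).comp_ofReal
  refine (hexp.fun_mul hpow).congr_deriv ?_
  have h : (z : ℂ) ^ c = (z : ℂ) ^ (c - 2) * (z : ℂ) ^ 2 := by
    rw [← cpow_natCast, ← cpow_add _ _ hz0]
    norm_num
  rw [expCpow, expCpow, h]
  field_simp
  ring

theorem hasDerivAt_deriv_expCpow (β c : ℂ) {z : ℝ} (hz : 0 < z) :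
    HasDerivAt (deriv (expCpow β c))
      (c * ((c - 1) * expCpow β (c - 2) z - β * expCpow β (c - 3) z)
        - β * ((c - 2) * expCpow β (c - 3) z - β * expCpow β (c - 4) z)) z := by
  have hderiv : deriv (expCpow β c) =ᶠ[𝓝 z]
      fun t => c * expCpow β (c - 1) t - β * expCpow β (c - 2) t := by
    filter_upwards [Ioi_mem_nhds hz] with t ht using (hasDerivAt_expCpow β c ht).deriv
  have h := ((hasDerivAt_expCpow β (c - 1) hz).const_mul c).sub
    ((hasDerivAt_expCpow β (c - 2) hz).const_mul β)
  rw [show c - 1 - 1 = c - 2 by ring, show c - 1 - 2 = c - 3 by ring,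
    show c - 2 - 1 = c - 3 by ring, show c - 2 - 2 = c - 4 by ring] at h
  exact h.congr_of_eventuallyEq hderiv

theorem sq_mul_deriv_deriv_expCpow_add (Am2 Am1 A0 A1 A2 β c : ℂ) {z : ℝ} (hz : 0 < z) :
    (z : ℂ) ^ 2 * deriv (deriv (expCpow β c)) z +
        (Am2 / (z : ℂ) ^ 2 + Am1 / (z : ℂ) + A0 + A1 * (z : ℂ) + A2 * (z : ℂ) ^ 2) *
          expCpow β c z =
      (β ^ 2 + Am2) * expCpow β (c - 2) z + (Am1 - 2 * β * (c - 1)) * expCpow β (c - 1) z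
        + (c * (c - 1) + A0) * expCpow β c z + A1 * expCpow β (c + 1) z
        + A2 * expCpow β (c + 2) z := by
  have hz0 : (z : ℂ) ≠ 0 := ofReal_ne_zero.mpr hz.ne'
  have hshift : ∀ (d : ℂ) (k : ℕ), d = c - 4 + k →
      expCpow β d z = (z : ℂ) ^ k * expCpow β (c - 4) z :=
    fun d k hd => hd ▸ expCpow_add_natCast β (c - 4) k hz.ne'
  rw [(hasDerivAt_deriv_expCpow β c hz).deriv,
    hshift (c - 3) 1 (by push_cast; ring), hshift (c - 2) 2 (by push_cast; ring),
    hshift (c - 1) 3 (by push_cast; ring), hshift c 4 (by push_cast; ring),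
    hshift (c + 1) 5 (by push_cast; ring), hshift (c + 2) 6 (by push_cast; ring)]
  field_simp
  ring

theorem deriv_deriv_sum_mul_expCpow {ι : Type*} (s : Finset ι) (a c : ι → ℂ) (β : ℂ) {z : ℝ}
    (hz : 0 < z) :
    deriv (deriv fun t => ∑ i ∈ s, a i * expCpow β (c i) t) z =
      ∑ i ∈ s, a i * deriv (deriv (expCpow β (c i))) z := by
  have hf : ∀ᶠ t in 𝓝 z, ∀ i ∈ s, DifferentiableAt ℝ (fun t => a i * expCpow β (c i) t) t := by
    filter_upwards [Ioi_mem_nhds hz] with t ht i _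
    exact (hasDerivAt_expCpow β _ ht).differentiableAt.const_mul _
  have hf' : ∀ i ∈ s, DifferentiableAt ℝ (deriv fun t => a i * expCpow β (c i) t) z :=
    fun i _ => by
      rw [deriv_const_mul_field']
      exact (hasDerivAt_deriv_expCpow β _ hz).differentiableAt.const_mul _
  rw [deriv_deriv_fun_sum hf hf']
  simp only [deriv_const_mul_field']

/-- a truncation `w(z) = e^{β/z} Σ_{m=0}^{N} b_m z^{ρ+m}` of the formal
solution at `z = 0` of the DCHE (with `β² = -A_{-2}`, `ρ = 1 + A_{-1}/(2β)`, and
coefficients satisfying `2βm b_m = (m-1+ρ)(m-2+ρ)b_{m-1} + A₀ b_{m-1} + A₁ b_{m-2}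
+ A₂ b_{m-3}`) satisfies the equation exactly up to three explicit boundary terms. -/
theorem dche_truncated_formal_origin_residual
    (Am2 Am1 A0 A1 A2 β ρ : ℂ) (hAm2 : Am2 ≠ 0)
    (hβ : β ^ 2 = -Am2) (hρ : ρ = 1 + Am1 / (2 * β)) (N : ℕ)
    (b : ℤ → ℂ) (hbm1 : b (-1) = 0) (hbm2 : b (-2) = 0)
    (hrec : ∀ m : ℤ, 1 ≤ m → m ≤ (N : ℤ) →
      2 * β * (m : ℂ) * b m =
        ((m : ℂ) - 1 + ρ) * ((m : ℂ) - 2 + ρ) * b (m - 1) + A0 * b (m - 1) +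
          A1 * b (m - 2) + A2 * b (m - 3))
    (w : ℝ → ℂ)
    (hw : ∀ z : ℝ, w z =
      Complex.exp (β / z) * ∑ m ∈ Finset.range (N + 1), b (m : ℤ) * (z : ℂ) ^ (ρ + (m : ℂ))) :
    ∀ z : ℝ, 0 < z →
      (z : ℂ) ^ 2 * deriv (deriv w) z +
        (Am2 / (z : ℂ) ^ 2 + Am1 / (z : ℂ) + A0 + A1 * (z : ℂ) + A2 * (z : ℂ) ^ 2) * w z =
      Complex.exp (β / z) *
        (((((N : ℂ) + ρ) * ((N : ℂ) - 1 + ρ) + A0) * b (N : ℤ) +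
            A1 * b ((N : ℤ) - 1) + A2 * b ((N : ℤ) - 2)) * (z : ℂ) ^ (ρ + (N : ℂ)) +
          (A1 * b (N : ℤ) + A2 * b ((N : ℤ) - 1)) * (z : ℂ) ^ (ρ + (N : ℂ) + 1) +
          A2 * b (N : ℤ) * (z : ℂ) ^ (ρ + (N : ℂ) + 2)) := by
  intro z hz
  have hβ0 : β ≠ 0 := by
    rintro rfl
    exact hAm2 (by linear_combination hβ)
  have hAm2' : Am2 = -β ^ 2 := by linear_combination hβ
  have hAm1 : Am1 = 2 * β * (ρ - 1) := by
    rw [hρ]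
    field_simp
    ring
  have hw' : w = fun t => ∑ m ∈ range (N + 1), b m * expCpow β (ρ + m) t := by
    funext t
    rw [hw, mul_sum]
    exact sum_congr rfl fun m _ => by rw [expCpow]; ring
  set e : ℕ → ℂ := fun k => expCpow β (ρ + k - 1) z
  have he : ∀ (d : ℂ) (k : ℕ), d = ρ + k - 1 → expCpow β d z = e k := fun d k hd => hd ▸ rfl
  rw [hw', deriv_deriv_sum_mul_expCpow _ _ _ _ hz]
  calc _ = ∑ m ∈ range (N + 1), b m * ((z : ℂ) ^ 2 * deriv (deriv (expCpow β (ρ + m))) z +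
        (Am2 / (z : ℂ) ^ 2 + Am1 / (z : ℂ) + A0 + A1 * (z : ℂ) + A2 * (z : ℂ) ^ 2) *
          expCpow β (ρ + m) z) := by
        rw [mul_sum, mul_sum, ← sum_add_distrib]
        exact sum_congr rfl fun m _ => by ring
    _ = ∑ m ∈ range (N + 1),
          b m * (-(2 * β * m) * e m + (((m : ℂ) + ρ) * ((m : ℂ) - 1 + ρ) + A0) * e (m + 1)
            + A1 * e (m + 2) + A2 * e (m + 3)) := sum_congr rfl fun m _ => by
        rw [sq_mul_deriv_deriv_expCpow_add _ _ _ _ _ _ _ hz, hAm2', hAm1,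
          he (ρ + m - 1) m rfl, he (ρ + m) (m + 1) (by push_cast; ring),
          he (ρ + m + 1) (m + 2) (by push_cast; ring),
          he (ρ + m + 2) (m + 3) (by push_cast; ring)]
        ring
    _ = _ := sum_mul_eq_boundary_of_recurrence β ρ A0 A1 A2 b e hbm1 hbm2 N hrec
    _ = _ := by
        rw [← he (ρ + N) (N + 1) (by push_cast; ring),
          ← he (ρ + N + 1) (N + 2) (by push_cast; ring),
          ← he (ρ + N + 2) (N + 3) (by push_cast; ring)]
        simp only [expCpow]
        ring
end

section
/- For every nonzero complex number z, the doubly infinite series Σ_{n∈ℤ} ĉ_n z^n converges absolutely and its sum equals exp(-1/z - z/2), where ĉ_n = (-1)^n Σ_{m=0}^{∞} 2^{-m-n}/(m!(m+n)!) for n ≥ 0 and ĉ_n = (-1)^n Σ_{m=0}^{∞} 2^{-m}/(m!(m-n)!) for n < 0 (all these series of nonnegative-denominator terms converge). -/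
/-!
Both `exp (-1/z)` and `exp (-z/2)` are given by absolutely convergent power series, so their
product is the absolutely convergent double series `∑ (-1/z)^j (-z/2)^k / (j! k!)` over `ℕ × ℕ`.
Grouping its terms along the diagonals `k - j = n` (each diagonal is a copy of `ℕ`, indexed by
`m = min j k`) collects exactly the terms carrying `z ^ n`, and since `(-1/z) (-z/2) = 1/2` the
sum along the `n`-th diagonal is `ĉ_n z^n`.
-/

open Nat NormedSpace

def diagonalEquiv : ℤ × ℕ ≃ ℕ × ℕ where
  toFun p := (p.2 + (-p.1).toNat, p.2 + p.1.toNat)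
  invFun q := ((q.2 : ℤ) - q.1, min q.1 q.2)
  left_inv := by rintro ⟨n, m⟩; ext <;> simp; omega
  right_inv := by rintro ⟨j, k⟩; ext <;> simp <;> omega

theorem summable_norm_tsum_prod_of_summable_norm {β γ E : Type*} [SeminormedAddCommGroup E]
    {f : β × γ → E} (hf : Summable fun p => ‖f p‖) :
    Summable fun b => ‖∑' c, f (b, c)‖ :=
  hf.prod.of_nonneg_of_le (fun _ => norm_nonneg _) fun b =>
    norm_tsum_le_tsum_norm (hf.prod_factor b)

section Diagonal

variable {𝕂 : Type*} [NormedField 𝕂]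

/-- The sum of the terms `a ^ j / j! * (b ^ k / k!)` of `exp a * exp b` with `k - j = n`. -/
noncomputable def expMulExpDiagonal (a b : 𝕂) (n : ℤ) : 𝕂 :=
  a ^ (-n).toNat * b ^ n.toNat *
    ∑' m : ℕ, (a * b) ^ m / ((m + (-n).toNat)! * (m + n.toNat)! : 𝕂)

theorem expMulExpDiagonal_natCast (a b : 𝕂) (t : ℕ) :
    expMulExpDiagonal a b t = b ^ t * ∑' m : ℕ, (a * b) ^ m / (m ! * (m + t)! : 𝕂) := by
  simp [expMulExpDiagonal]

theorem expMulExpDiagonal_neg_natCast (a b : 𝕂) (s : ℕ) :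
    expMulExpDiagonal a b (-s) = a ^ s * ∑' m : ℕ, (a * b) ^ m / (m ! * (m + s)! : 𝕂) := by
  simp [expMulExpDiagonal, mul_comm]

theorem pow_div_factorial_mul_pow_div_factorial (a b : 𝕂) (s t m : ℕ) :
    a ^ (m + s) / (m + s)! * (b ^ (m + t) / (m + t)!) =
      a ^ s * b ^ t * ((a * b) ^ m / ((m + s)! * (m + t)!)) := by
  rw [pow_add, pow_add, mul_pow]
  ring

variable [NormedAlgebra ℚ 𝕂] [CompleteSpace 𝕂]

theorem summable_pow_div_factorial_mul_factorial (x : 𝕂) (t : ℕ) :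
    Summable fun m : ℕ => x ^ m / (m ! * (m + t)! : 𝕂) := by
  have norm_natCast (n : ℕ) : ‖(n : 𝕂)‖ = n := by
    rw [← map_natCast (algebraMap ℚ 𝕂), norm_algebraMap', ← Rat.norm_cast_real]
    simp
  refine .of_norm <| (Real.summable_pow_div_factorial ‖x‖).of_nonneg_of_le
    (fun _ => norm_nonneg _) fun m => ?_
  rw [norm_div, norm_pow, norm_mul, norm_natCast, norm_natCast]
  gcongr
  exact le_mul_of_one_le_right (by positivity) (mod_cast (m + t).factorial_pos)

theorem summable_norm_expMulExpDiagonal_and_hasSum (a b : 𝕂) :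
    Summable (fun n => ‖expMulExpDiagonal a b n‖) ∧
      HasSum (expMulExpDiagonal a b) (exp a * exp b) := by
  let F : ℕ × ℕ → 𝕂 := fun q => a ^ q.1 / q.1 ! * (b ^ q.2 / q.2 !)
  let G : ℤ × ℕ → 𝕂 := F ∘ diagonalEquiv
  have hF : Summable fun q => ‖F q‖ :=
    Summable.mul_norm (f := fun j : ℕ => a ^ j / j !) (g := fun k : ℕ => b ^ k / k !)
      (norm_expSeries_div_summable a) (norm_expSeries_div_summable b)
  have hG : Summable fun p => ‖G p‖ := (diagonalEquiv.summable_iff (f := fun q => ‖F q‖)).2 hF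
  have hsum : HasSum G (exp a * exp b) :=
    (diagonalEquiv.hasSum_iff (f := F)).2 <|
      HasSum.mul (f := fun j : ℕ => a ^ j / j !) (g := fun k : ℕ => b ^ k / k !)
        (expSeries_div_hasSum_exp a) (expSeries_div_hasSum_exp b) hF.of_norm
  have hfiber : (fun n => ∑' m, G (n, m)) = expMulExpDiagonal a b := by
    ext n
    simp only [G, F, Function.comp_apply, diagonalEquiv, Equiv.coe_fn_mk,
      pow_div_factorial_mul_pow_div_factorial]
    rw [expMulExpDiagonal, tsum_mul_left]
  rw [← hfiber]
  exact ⟨summable_norm_tsum_prod_of_summable_norm hG,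
    hsum.prod_fiberwise fun n => (hG.of_norm.prod_factor n).hasSum⟩

end Diagonal

theorem two_zpow_neg_sub_div (m t : ℕ) (d : ℂ) :
    (2 : ℂ) ^ (-(m : ℤ) - t) / d = 2⁻¹ ^ t * (2⁻¹ ^ m / d) := by
  rw [sub_eq_add_neg, zpow_add₀ two_ne_zero, zpow_neg, zpow_neg, zpow_natCast, zpow_natCast,
    inv_pow, inv_pow]
  ring

theorem neg_inv_mul_neg_div_two {z : ℂ} (hz : z ≠ 0) : -z⁻¹ * (-z / 2) = 2⁻¹ := by
  field_simp

theorem expMulExpDiagonal_neg_inv_neg_div_two_natCast {z : ℂ} (hz : z ≠ 0) (t : ℕ) :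
    expMulExpDiagonal (-z⁻¹) (-z / 2) t =
      (-1) ^ (t : ℤ) * (∑' m : ℕ, (2 : ℂ) ^ (-(m : ℤ) - t) / (m ! * (m + t)!)) * z ^ (t : ℤ) := by
  rw [expMulExpDiagonal_natCast, neg_inv_mul_neg_div_two hz]
  simp only [two_zpow_neg_sub_div, tsum_mul_left, zpow_natCast]
  rw [neg_div, neg_pow (z / 2), div_eq_mul_inv, mul_pow]
  ring

theorem expMulExpDiagonal_neg_inv_neg_div_two_neg_natCast {z : ℂ} (hz : z ≠ 0) (s : ℕ) :
    expMulExpDiagonal (-z⁻¹) (-z / 2) (-s) =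
      (-1) ^ (-(s : ℤ)) * (∑' m : ℕ, (2 : ℂ) ^ (-(m : ℤ)) / (m ! * (m + s)!)) *
        z ^ (-(s : ℤ)) := by
  rw [expMulExpDiagonal_neg_natCast, neg_inv_mul_neg_div_two hz]
  simp only [zpow_neg, zpow_natCast, inv_pow]
  rw [neg_pow z⁻¹, ← inv_pow (-1 : ℂ) s, inv_neg_one]
  ring

/-- with `ĉ_n = (-1)^n Σ_{m=0}^∞ 2^{-m-n}/(m!(m+n)!)` for `n ≥ 0` and
`ĉ_n = (-1)^n Σ_{m=0}^∞ 2^{-m}/(m!(m-n)!)` for `n < 0` (all these inner series converge),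
the doubly infinite series `Σ_{n∈ℤ} ĉ_n z^n` converges absolutely for every `z ≠ 0`
and its sum is `exp(-1/z - z/2)`. -/
theorem heaviside_type_expansion
    (c : ℤ → ℂ)
    (hc_nonneg : ∀ n : ℤ, 0 ≤ n → c n =
      (-1 : ℂ) ^ n * ∑' m : ℕ, (2 : ℂ) ^ (-(m : ℤ) - n) /
        ((Nat.factorial m : ℂ) * (Nat.factorial (m + n.toNat) : ℂ)))
    (hc_neg : ∀ n : ℤ, n < 0 → c n =
      (-1 : ℂ) ^ n * ∑' m : ℕ, (2 : ℂ) ^ (-(m : ℤ)) /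
        ((Nat.factorial m : ℂ) * (Nat.factorial (m + (-n).toNat) : ℂ))) :
    (∀ n : ℤ, 0 ≤ n → Summable (fun m : ℕ => (2 : ℂ) ^ (-(m : ℤ) - n) /
      ((Nat.factorial m : ℂ) * (Nat.factorial (m + n.toNat) : ℂ)))) ∧
    (∀ n : ℤ, n < 0 → Summable (fun m : ℕ => (2 : ℂ) ^ (-(m : ℤ)) /
      ((Nat.factorial m : ℂ) * (Nat.factorial (m + (-n).toNat) : ℂ)))) ∧
    ∀ z : ℂ, z ≠ 0 →
      Summable (fun n : ℤ => ‖c n * z ^ n‖) ∧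
      HasSum (fun n : ℤ => c n * z ^ n) (Complex.exp (-z⁻¹ - z / 2)) := by
  refine ⟨fun n hn => ?_, fun n _ => ?_, fun z hz => ?_⟩
  · lift n to ℕ using hn
    simp only [Int.toNat_natCast, two_zpow_neg_sub_div]
    exact (summable_pow_div_factorial_mul_factorial (2⁻¹ : ℂ) n).mul_left _
  · simpa [zpow_neg, inv_pow] using summable_pow_div_factorial_mul_factorial (2⁻¹ : ℂ) (-n).toNat
  have hcoeff : ∀ n, c n * z ^ n = expMulExpDiagonal (-z⁻¹) (-z / 2) n := by
    intro n
    rcases le_or_gt 0 n with hn | hn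
    · lift n to ℕ using hn
      rw [hc_nonneg n n.cast_nonneg, Int.toNat_natCast,
        expMulExpDiagonal_neg_inv_neg_div_two_natCast hz]
    · obtain ⟨s, rfl⟩ : ∃ s : ℕ, n = -s := ⟨(-n).toNat, by omega⟩
      rw [hc_neg _ hn, neg_neg, Int.toNat_natCast,
        expMulExpDiagonal_neg_inv_neg_div_two_neg_natCast hz]
  have hexp : exp (-z⁻¹) * exp (-z / 2) = Complex.exp (-z⁻¹ - z / 2) := by
    rw [← Complex.exp_eq_exp_ℂ, ← Complex.exp_add, neg_div, sub_eq_add_neg]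
  simpa only [hcoeff, hexp] using summable_norm_expMulExpDiagonal_and_hasSum (-z⁻¹) (-z / 2)
end

section
/- Let α, β, γ, δ ∈ ℂ and suppose y : (-1,1) → ℂ is twice differentiable and satisfies the Jaffé–Lay form of the DCHE: y''(t) - [(α + 2t + αt² - 2t³)/(t²-1)²]·y'(t) + [(δ + (2α+γ)t + βt²)/(t²-1)³]·y(t) = 0 for all t ∈ (-1,1). Define, for z > 0, w(z) = z^{1/2}·exp( -(α/8)(z - 1/z) )·y((z-1)/(z+1)). Then w satisfies z² w''(z) + (Σ_{p=-2}^{2} A_p z^p) w(z) = 0 for all z > 0, with A_{-2} = -α²/64, A_{-1} = (γ - β - δ)/16, A_0 = (8 - α² + 4(β - δ))/32, A_1 = (-γ - β - δ)/16, A_2 = -α²/64. -/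
/-!
Put `Y = y ∘ cayley` with `cayley z = (z - 1)/(z + 1)`, and write the gauge factor as `g = exp h`,
`h z = (log z)/2 - (α/8)(z - 1/z)`. Then `w = g Y` and `w''/g = (h'' + h'²) Y + 2 h' Y' + Y''`.
After `y''(cayley z)` is eliminated with the Jaffé–Lay equation, the `y'` terms cancel (this is
what determines `h'`), and the `y` terms add up to `-(Σ A_p z^p) y / z²`. Both facts are identities
between rational functions of `z`.
-/

open Complex Filter Topology

section SecondDerivative

variable {𝕜 : Type*} [NontriviallyNormedField 𝕜]

theorem deriv_deriv_eq_of_hasDerivAt {F : Type*} [NormedAddCommGroup F] [NormedSpace 𝕜 F]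
    {f f' : 𝕜 → F} {f'' : F} {z : 𝕜} (hf : ∀ᶠ x in 𝓝 z, HasDerivAt f (f' x) x)
    (hf' : HasDerivAt f' f'' z) : deriv (deriv f) z = f'' := by
  have hderiv : deriv f =ᶠ[𝓝 z] f' := hf.mono fun _ hx => hx.deriv
  rw [hderiv.deriv_eq, hf'.deriv]

theorem deriv_deriv_mul {𝔸 : Type*} [NormedCommRing 𝔸] [NormedAlgebra 𝕜 𝔸]
    {g h g' h' : 𝕜 → 𝔸} {g'' h'' : 𝔸} {z : 𝕜}
    (hg : ∀ᶠ x in 𝓝 z, HasDerivAt g (g' x) x) (hh : ∀ᶠ x in 𝓝 z, HasDerivAt h (h' x) x)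
    (hg' : HasDerivAt g' g'' z) (hh' : HasDerivAt h' h'' z) :
    deriv (deriv (g * h)) z = g'' * h z + 2 * (g' z * h' z) + g z * h'' := by
  refine deriv_deriv_eq_of_hasDerivAt (f' := g' * h + g * h') ?_ ?_
  · filter_upwards [hg, hh] with x hgx hhx using hgx.mul hhx
  · convert (hg'.mul hh.self_of_nhds).add (hg.self_of_nhds.mul hh') using 1
    ring

end SecondDerivative

section Cayley

def cayley {K : Type*} [Field K] (x : K) : K := (x - 1) / (x + 1)

theorem cayley_sq_sub_one {K : Type*} [Field K] {x : K} (hx : x + 1 ≠ 0) :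
    cayley x ^ 2 - 1 = -4 * x / (x + 1) ^ 2 := by
  rw [cayley]
  field_simp
  ring

theorem Complex.ofReal_cayley (x : ℝ) : ((cayley x : ℝ) : ℂ) = cayley (x : ℂ) := by
  simp [cayley]

theorem cayley_mem_Ioo {x : ℝ} (hx : 0 < x) : cayley x ∈ Set.Ioo (-1 : ℝ) 1 := by
  have hx1 : 0 < x + 1 := by linarith
  constructor
  · rw [cayley, lt_div_iff₀ hx1]; linarith
  · rw [cayley, div_lt_one hx1]; linarith

variable {𝕜 : Type*} [NontriviallyNormedField 𝕜] {x : 𝕜}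

theorem hasDerivAt_cayley (hx : x + 1 ≠ 0) : HasDerivAt cayley (2 / (x + 1) ^ 2) x := by
  refine (((hasDerivAt_id' x).sub_const 1).div ((hasDerivAt_id' x).add_const 1) hx).congr_deriv ?_
  ring

theorem hasDerivAt_two_div_add_one_sq (hx : x + 1 ≠ 0) :
    HasDerivAt (fun x : 𝕜 => 2 / (x + 1) ^ 2) (-4 / (x + 1) ^ 3) x := by
  refine ((hasDerivAt_const x (2 : 𝕜)).div (((hasDerivAt_id' x).add_const 1).fun_pow 2)
    (pow_ne_zero 2 hx)).congr_deriv ?_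
  field_simp
  ring

end Cayley

section Gauge

variable (α : ℂ)

noncomputable def gaugeFactor (x : ℝ) : ℂ :=
  (↑(x ^ ((1 : ℝ) / 2)) : ℂ) * Complex.exp (-(α / 8) * ((x : ℂ) - 1 / (x : ℂ)))

noncomputable def gaugeExponent (z : ℂ) : ℂ := log z / 2 - α / 8 * (z - z⁻¹)

noncomputable def gaugeLogDeriv (z : ℂ) : ℂ := z⁻¹ / 2 - α / 8 * (1 + z⁻¹ ^ 2)

theorem gaugeFactor_eq_exp {x : ℝ} (hx : 0 < x) :
    gaugeFactor α x = exp (gaugeExponent α x) := by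
  have hx0 : (x : ℂ) ≠ 0 := by exact_mod_cast hx.ne'
  rw [gaugeFactor, gaugeExponent, ofReal_cpow hx.le, cpow_def_of_ne_zero hx0, ← exp_add]
  congr 1
  push_cast
  ring

theorem hasDerivAt_gaugeExponent {z : ℂ} (hz : z ∈ slitPlane) :
    HasDerivAt (gaugeExponent α) (gaugeLogDeriv α z) z := by
  have hz0 := slitPlane_ne_zero hz
  refine (((hasDerivAt_log hz).div_const 2).sub
    (((hasDerivAt_id' z).sub (hasDerivAt_inv hz0)).const_mul (α / 8))).congr_deriv ?_
  rw [gaugeLogDeriv]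
  ring

theorem hasDerivAt_gaugeFactor {x : ℝ} (hx : 0 < x) :
    HasDerivAt (gaugeFactor α) (gaugeFactor α x * gaugeLogDeriv α x) x := by
  have h := (hasDerivAt_gaugeExponent α (ofReal_mem_slitPlane.2 hx)).comp_ofReal.cexp
  rw [← gaugeFactor_eq_exp α hx] at h
  refine h.congr_of_eventuallyEq ?_
  filter_upwards [Ioi_mem_nhds hx] with t ht using gaugeFactor_eq_exp α ht

theorem hasDerivAt_gaugeLogDeriv {z : ℂ} (hz : z ≠ 0) :
    HasDerivAt (gaugeLogDeriv α) (α / 4 * z⁻¹ ^ 3 - z⁻¹ ^ 2 / 2) z := by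
  refine (((hasDerivAt_inv hz).div_const 2).sub
    ((((hasDerivAt_inv hz).fun_pow 2).const_add 1).const_mul (α / 8))).congr_deriv ?_
  push_cast
  ring

end Gauge

section Coefficients

variable (α β γ δ : ℂ)

noncomputable def jaffeLayDrift (t : ℂ) : ℂ :=
  (α + 2 * t + α * t ^ 2 - 2 * t ^ 3) / (t ^ 2 - 1) ^ 2

noncomputable def jaffeLayPotential (t : ℂ) : ℂ :=
  (δ + (2 * α + γ) * t + β * t ^ 2) / (t ^ 2 - 1) ^ 3

noncomputable def derivativeFreePotential (z : ℂ) : ℂ :=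
  (-α ^ 2 / 64) / z ^ 2 + ((γ - β - δ) / 16) / z + (8 - α ^ 2 + 4 * (β - δ)) / 32 +
    ((-γ - β - δ) / 16) * z + (-α ^ 2 / 64) * z ^ 2

variable {z : ℂ}

theorem jaffeLayDrift_cayley (hz : z ≠ 0) (hz1 : z + 1 ≠ 0) :
    jaffeLayDrift α (cayley z) =
      (z + 1) * (2 * α * (z ^ 2 + 1) * (z + 1) + 8 * z * (z - 1)) / (16 * z ^ 2) := by
  rw [jaffeLayDrift, cayley_sq_sub_one hz1, cayley]
  field_simp
  ring

theorem jaffeLayPotential_cayley (hz : z ≠ 0) (hz1 : z + 1 ≠ 0) :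
    jaffeLayPotential α β γ δ (cayley z) =
      -((z + 1) ^ 4 * (δ * (z + 1) ^ 2 + (2 * α + γ) * (z - 1) * (z + 1) + β * (z - 1) ^ 2)) /
        (64 * z ^ 3) := by
  rw [jaffeLayPotential, cayley_sq_sub_one hz1, cayley]
  field_simp
  ring

/-- `z² w''/g + (Σ A_p z^p) w/g` at `z`, where `y₀, y₁, y₂` are `y, y', y''` at `cayley z`. -/
theorem derivativeFree_reduction {y₀ y₁ y₂ : ℂ} (hz : z ≠ 0) (hz1 : z + 1 ≠ 0)
    (hode : y₂ - jaffeLayDrift α (cayley z) * y₁ + jaffeLayPotential α β γ δ (cayley z) * y₀ = 0) :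
    z ^ 2 * ((gaugeLogDeriv α z ^ 2 + (α / 4 * z⁻¹ ^ 3 - z⁻¹ ^ 2 / 2)) * y₀ +
        2 * gaugeLogDeriv α z * (2 / (z + 1) ^ 2 * y₁) +
        (-4 / (z + 1) ^ 3 * y₁ + (2 / (z + 1) ^ 2) ^ 2 * y₂)) +
      derivativeFreePotential α β γ δ z * y₀ = 0 := by
  rw [jaffeLayDrift_cayley α hz hz1, jaffeLayPotential_cayley α β γ δ hz hz1] at hode
  rw [gaugeLogDeriv, derivativeFreePotential]
  linear_combination (norm := skip) (z ^ 2 * (2 / (z + 1) ^ 2) ^ 2) * hode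
  field_simp
  ring

end Coefficients

/-- if `y` solves the Jaffé–Lay form of the DCHE on `(-1,1)`, then
`w(z) = z^{1/2} exp(-(α/8)(z - 1/z)) y((z-1)/(z+1))` solves the derivative-free DCHE
`z² w'' + (Σ_{p=-2}^{2} A_p z^p) w = 0` on `(0,∞)` with
`A_{-2} = -α²/64`, `A_{-1} = (γ-β-δ)/16`, `A₀ = (8-α²+4(β-δ))/32`,
`A₁ = (-γ-β-δ)/16`, `A₂ = -α²/64`. -/
theorem jaffe_lay_to_derivative_free
    (α β γ δ : ℂ)
    (y : ℝ → ℂ)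
    (hy1 : ∀ t : ℝ, t ∈ Set.Ioo (-1 : ℝ) 1 → DifferentiableAt ℝ y t)
    (hy2 : ∀ t : ℝ, t ∈ Set.Ioo (-1 : ℝ) 1 → DifferentiableAt ℝ (deriv y) t)
    (hyeq : ∀ t : ℝ, t ∈ Set.Ioo (-1 : ℝ) 1 →
      deriv (deriv y) t -
        ((α + 2 * (t : ℂ) + α * (t : ℂ) ^ 2 - 2 * (t : ℂ) ^ 3) / ((t : ℂ) ^ 2 - 1) ^ 2) *
          deriv y t +
        ((δ + (2 * α + γ) * (t : ℂ) + β * (t : ℂ) ^ 2) / ((t : ℂ) ^ 2 - 1) ^ 3) * y t = 0)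
    (w : ℝ → ℂ)
    (hw : ∀ z : ℝ, w z =
      (↑(z ^ ((1 : ℝ) / 2)) : ℂ) * Complex.exp (-(α / 8) * ((z : ℂ) - 1 / (z : ℂ))) *
        y ((z - 1) / (z + 1))) :
    ∀ z : ℝ, 0 < z →
      (z : ℂ) ^ 2 * deriv (deriv w) z +
        ((-α ^ 2 / 64) / (z : ℂ) ^ 2 + ((γ - β - δ) / 16) / (z : ℂ) +
          (8 - α ^ 2 + 4 * (β - δ)) / 32 + ((-γ - β - δ) / 16) * (z : ℂ) +
          (-α ^ 2 / 64) * (z : ℂ) ^ 2) * w z = 0 := by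
  intro z hz
  have hz0 : (z : ℂ) ≠ 0 := by exact_mod_cast hz.ne'
  have hz1 : (z : ℂ) + 1 ≠ 0 := by exact_mod_cast (by positivity : z + 1 ≠ 0)
  have hw' : w = gaugeFactor α * fun x => y (cayley x) := funext hw
  have hg : ∀ᶠ x in 𝓝 z, HasDerivAt (gaugeFactor α) (gaugeFactor α x * gaugeLogDeriv α x) x := by
    filter_upwards [Ioi_mem_nhds hz] with x hx using hasDerivAt_gaugeFactor α hx
  have hY : ∀ᶠ x in 𝓝 z,
      HasDerivAt (fun x => y (cayley x)) ((2 / (x + 1) ^ 2) • deriv y (cayley x)) x := by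
    filter_upwards [Ioi_mem_nhds hz] with x (hx : 0 < x)
    exact (hy1 _ (cayley_mem_Ioo hx)).hasDerivAt.scomp x (hasDerivAt_cayley (by positivity))
  have hg' := (hasDerivAt_gaugeFactor α hz).mul (hasDerivAt_gaugeLogDeriv α hz0).comp_ofReal
  have hY' := (hasDerivAt_two_div_add_one_sq (x := z) (by positivity)).smul
    ((hy2 _ (cayley_mem_Ioo hz)).hasDerivAt.scomp z (hasDerivAt_cayley (by positivity)))
  have hode := hyeq _ (cayley_mem_Ioo hz)
  rw [Complex.ofReal_cayley] at hode
  change (z : ℂ) ^ 2 * _ + derivativeFreePotential α β γ δ z * _ = 0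
  rw [hw', deriv_deriv_mul hg hY hg' hY']
  simp only [real_smul, Pi.mul_apply, Function.comp_apply]
  push_cast
  linear_combination gaugeFactor α z * derivativeFree_reduction α β γ δ hz0 hz1 hode
end
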